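/- Let f : ℝⁿ → ℝ be differentiable with L-Lipschitz gradient, let D ⊂ ℝⁿ be a finite set of nonzero vectors with cosine measure κ(D) ≥ κ_min > 0 and d_min ≤ ‖d‖ ≤ d_max for all d ∈ D. Let c > 0, ε_f > 0, γ > 2, p > 1, δ ∈ (0,1), and x ∈ ℝⁿ. Suppose that for every d ∈ D, f(x + δd) - f(x) + (γ+2) c ε_f δ^p ≥ 0. Then ‖∇f(x)‖ ≤ κ_min⁻¹ (L d_max + (γ+2) c ε_f d_min⁻¹) · δ^{min(p-1, 1)}. -/

import Mathlib

open scoped RealInnerProductSpace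

/-- Cosine measure of a nonempty finite set of vectors:
`κ(D) = inf over unit vectors v of max_{d ∈ D} ⟪v, d⟫ / ‖d‖`. -/
noncomputable def cosineMeasure {n : ℕ} (D : Finset (EuclideanSpace ℝ (Fin n)))
    (hD : D.Nonempty) : ℝ :=
  ⨅ v : Metric.sphere (0 : EuclideanSpace ℝ (Fin n)) 1,
    D.sup' hD fun d => ⟪(v : EuclideanSpace ℝ (Fin n)), d⟫ / ‖d‖

/-! Apply the cosine-measure bound to the unit vector `-∇f(x)/‖∇f(x)‖`: some `d ∈ D` has
`κ ‖∇f(x)‖ ‖d‖ ≤ -⟪∇f(x), d⟫`. The mean value inequality for `∇f` bounds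
`f(x + δd) - f(x) - δ⟪∇f(x), d⟫` by `L δ² ‖d‖²`, so the failed decrease test along `d` gives
`κ ‖∇f(x)‖ δ‖d‖ ≤ L δ² ‖d‖² + (γ+2) c ε_f δ^p`. Dividing by `δ‖d‖` and using
`δ, δ^(p-1) ≤ δ^min(p-1, 1)` for `δ < 1` gives the bound. -/

section Gradient

variable {E : Type*} [NormedAddCommGroup E] [InnerProductSpace ℝ E] [CompleteSpace E]
  {f : E → ℝ} {L : ℝ}

lemma nonneg_of_norm_gradient_sub_le
    (hlip : ∀ x y : E, ‖gradient f x - gradient f y‖ ≤ L * ‖x - y‖) {x y : E} (hxy : x ≠ y) :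
    0 ≤ L :=
  nonneg_of_mul_nonneg_left ((norm_nonneg _).trans (hlip x y))
    (norm_pos_iff.mpr (sub_ne_zero.mpr hxy))

lemma sub_sub_inner_gradient_le (hdiff : Differentiable ℝ f)
    (hlip : ∀ x y : E, ‖gradient f x - gradient f y‖ ≤ L * ‖x - y‖) (x y : E) :
    f y - f x - ⟪gradient f x, y - x⟫ ≤ L * ‖y - x‖ ^ 2 := by
  rcases eq_or_ne y x with rfl | hyx
  · simp
  have hbound : ∀ z ∈ segment ℝ x y, ‖fderiv ℝ f z - fderiv ℝ f x‖ ≤ L * ‖y - x‖ := by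
    intro z hz
    rw [← toDual_gradient, ← toDual_gradient, ← map_sub, LinearIsometryEquiv.norm_map]
    exact (hlip z x).trans <| mul_le_mul_of_nonneg_left (norm_sub_le_of_mem_segment hz)
      (nonneg_of_norm_gradient_sub_le hlip hyx)
  have h := (convex_segment x y).norm_image_sub_le_of_norm_hasFDerivWithin_le'
    (fun z _ => (hdiff z).hasFDerivAt.hasFDerivWithinAt) hbound
    (left_mem_segment ℝ x y) (right_mem_segment ℝ x y)
  rw [← toDual_gradient, InnerProductSpace.toDual_apply_apply] at h
  rw [sq, ← mul_assoc]
  exact (Real.le_norm_self _).trans h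

lemma mul_norm_gradient_mul_le_of_no_sufficient_decrease (hdiff : Differentiable ℝ f)
    (hlip : ∀ x y : E, ‖gradient f x - gradient f y‖ ≤ L * ‖x - y‖) {x d : E} {κ δ ρ : ℝ}
    (hδ : 0 ≤ δ) (hκd : κ * ‖gradient f x‖ * ‖d‖ ≤ -⟪gradient f x, d⟫)
    (hfail : 0 ≤ f (x + δ • d) - f x + ρ) :
    κ * ‖gradient f x‖ * (δ * ‖d‖) ≤ L * (δ * ‖d‖) ^ 2 + ρ := by
  have hdesc := sub_sub_inner_gradient_le hdiff hlip x (x + δ • d)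
  rw [add_sub_cancel_left, norm_smul, Real.norm_of_nonneg hδ, real_inner_smul_right] at hdesc
  linarith [mul_le_mul_of_nonneg_left hκd hδ]

end Gradient

section CosineMeasure

variable {n : ℕ} {D : Finset (EuclideanSpace ℝ (Fin n))}

lemma cosineMeasure_le_sup' (hD : D.Nonempty) {v : EuclideanSpace ℝ (Fin n)} (hv : ‖v‖ = 1) :
    cosineMeasure D hD ≤ D.sup' hD fun d => ⟪v, d⟫ / ‖d‖ := by
  refine ciInf_le ⟨-1, ?_⟩ (⟨v, by simpa using hv⟩ : Metric.sphere _ 1)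
  rintro _ ⟨u, rfl⟩
  obtain ⟨d, hd⟩ := hD
  refine le_trans ?_ (D.le_sup' _ hd)
  have h := abs_real_inner_div_norm_mul_norm_le_one (u : EuclideanSpace ℝ (Fin n)) d
  simpa [norm_eq_of_mem_sphere u] using neg_le_of_abs_le h

lemma exists_mem_mul_norm_mul_norm_le_neg_inner (hD : D.Nonempty) {κ : ℝ}
    (hκ : κ ≤ cosineMeasure D hD) (g : EuclideanSpace ℝ (Fin n)) :
    ∃ d ∈ D, κ * ‖g‖ * ‖d‖ ≤ -⟪g, d⟫ := by
  rcases eq_or_ne g 0 with rfl | hg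
  · obtain ⟨d, hd⟩ := hD
    exact ⟨d, hd, by simp⟩
  set v := -(‖g‖⁻¹ • g)
  have hv : ‖v‖ = 1 := by simp [v, norm_smul, hg]
  obtain ⟨d, hd, hsup⟩ := D.exists_mem_eq_sup' hD fun d => ⟪v, d⟫ / ‖d‖
  refine ⟨d, hd, ?_⟩
  have hκd : κ * ‖d‖ ≤ ⟪v, d⟫ := by
    have h := hκ.trans ((cosineMeasure_le_sup' hD hv).trans_eq hsup)
    rcases eq_or_ne d 0 with rfl | hd0
    · simp
    exact (le_div_iff₀ (norm_pos_iff.mpr hd0)).mp h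
  calc κ * ‖g‖ * ‖d‖ = ‖g‖ * (κ * ‖d‖) := by ring
    _ ≤ ‖g‖ * ⟪v, d⟫ := by gcongr
    _ = -⟪g, d⟫ := by
      simp only [v, inner_neg_left, real_inner_smul_left]
      field_simp

end CosineMeasure

theorem stmt_11_general {n : ℕ} (f : EuclideanSpace ℝ (Fin n) → ℝ) (L : ℝ)
    (hdiff : Differentiable ℝ f)
    (hlip : ∀ x y : EuclideanSpace ℝ (Fin n),
      ‖gradient f x - gradient f y‖ ≤ L * ‖x - y‖)
    (D : Finset (EuclideanSpace ℝ (Fin n))) (hD : D.Nonempty)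
    (κmin dmin dmax : ℝ) (hκmin : 0 < κmin)
    (hκ : κmin ≤ cosineMeasure D hD)
    (hdmin : 0 < dmin)
    (hnorm : ∀ d ∈ D, dmin ≤ ‖d‖ ∧ ‖d‖ ≤ dmax)
    (c εf γ p δ : ℝ) (hc : 0 < c) (hεf : 0 < εf) (hγ : 2 < γ)
    (hδ0 : 0 < δ) (hδ1 : δ < 1)
    (x : EuclideanSpace ℝ (Fin n))
    (hfail : ∀ d ∈ D, f (x + δ • d) - f x + (γ + 2) * c * εf * δ ^ p ≥ 0) :
    ‖gradient f x‖ ≤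
      κmin⁻¹ * (L * dmax + (γ + 2) * c * εf * dmin⁻¹) * δ ^ min (p - 1) 1 := by
  set g := gradient f x
  set C := (γ + 2) * c * εf
  obtain ⟨d, hd, hκd⟩ := exists_mem_mul_norm_mul_norm_le_neg_inner hD hκ g
  obtain ⟨hdmin_d, hd_dmax⟩ := hnorm d hd
  have hd_pos : 0 < ‖d‖ := hdmin.trans_le hdmin_d
  have hL : 0 ≤ L :=
    nonneg_of_norm_gradient_sub_le hlip (x := x + d) (y := x) (by simpa using hd_pos.ne')
  have hstep :
      κmin * ‖g‖ * (δ * ‖d‖) ≤ (L * δ * ‖d‖ + C * δ ^ (p - 1) * ‖d‖⁻¹) * (δ * ‖d‖) := by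
    have hδp : δ ^ p = δ ^ (p - 1) * δ := by rw [Real.rpow_sub_one hδ0.ne']; field_simp
    calc κmin * ‖g‖ * (δ * ‖d‖) ≤ L * (δ * ‖d‖) ^ 2 + C * δ ^ p :=
          mul_norm_gradient_mul_le_of_no_sufficient_decrease hdiff hlip hδ0.le hκd
            (hfail d hd)
      _ = _ := by rw [hδp]; field_simp
  have hδm : δ ≤ δ ^ min (p - 1) 1 := by
    simpa using Real.rpow_le_rpow_of_exponent_ge hδ0 hδ1.le (min_le_right (p - 1) 1)
  have hδpm : δ ^ (p - 1) ≤ δ ^ min (p - 1) 1 :=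
    Real.rpow_le_rpow_of_exponent_ge hδ0 hδ1.le (min_le_left _ _)
  have hC : 0 ≤ C := by positivity
  rw [mul_assoc, le_inv_mul_iff₀ hκmin]
  calc κmin * ‖g‖ ≤ L * δ * ‖d‖ + C * δ ^ (p - 1) * ‖d‖⁻¹ :=
        le_of_mul_le_mul_right hstep (by positivity)
    _ ≤ L * δ ^ min (p - 1) 1 * dmax + C * δ ^ min (p - 1) 1 * dmin⁻¹ := by gcongr
    _ = _ := by ring

theorem stmt_11 {n : ℕ} (f : EuclideanSpace ℝ (Fin n) → ℝ) (L : ℝ)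
    (hdiff : Differentiable ℝ f)
    (hlip : ∀ x y : EuclideanSpace ℝ (Fin n),
      ‖gradient f x - gradient f y‖ ≤ L * ‖x - y‖)
    (D : Finset (EuclideanSpace ℝ (Fin n))) (hD : D.Nonempty)
    (hD0 : ∀ d ∈ D, d ≠ 0)
    (κmin dmin dmax : ℝ) (hκmin : 0 < κmin)
    (hκ : κmin ≤ cosineMeasure D hD)
    (hdmin : 0 < dmin)
    (hnorm : ∀ d ∈ D, dmin ≤ ‖d‖ ∧ ‖d‖ ≤ dmax)
    (c εf γ p δ : ℝ) (hc : 0 < c) (hεf : 0 < εf) (hγ : 2 < γ) (hp : 1 < p)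
    (hδ0 : 0 < δ) (hδ1 : δ < 1)
    (x : EuclideanSpace ℝ (Fin n))
    (hfail : ∀ d ∈ D, f (x + δ • d) - f x + (γ + 2) * c * εf * δ ^ p ≥ 0) :
    ‖gradient f x‖ ≤
      κmin⁻¹ * (L * dmax + (γ + 2) * c * εf * dmin⁻¹) * δ ^ min (p - 1) 1 :=
  stmt_11_general f L hdiff hlip D hD κmin dmin dmax hκmin hκ hdmin hnorm c εf γ p δ hc hεf hγ hδ0
    hδ1 x hfail
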